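/- (Majority property via autarkic sets) Let Σ ⊆ Π be an autarkic set and suppose the valuation v satisfies min_{p ∈ Σ} v_p − max_{p ∈ Σ} v_{¬p} > α for some α ∈ [0,1). Then every proposition in Σ is accepted in the decision of margin α associated with the upper revised valuation: v*_p − v*_{¬p} > α for all p ∈ Σ. -/

import Mathlib

/-!
The tertium-non-datur clause `{p, ¬p}` makes the revision step inflationary, so `v*_p ≥ v_p`.
On the other side, autarky says that every clause through `¬r` (with `r ∈ Σ`) also contains some
`q ∈ Σ`, and `q ≠ ¬r`; the clause's contribution to the revised value of `¬r` is therefore at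
most the current value of `¬q`. Hence any strict upper bound on the values `v_{¬r}`, `r ∈ Σ`, survives every
revision step, and the majority margin of `v` passes to `v*`.
-/

open Finset

structure Doctrine (L : Type) [DecidableEq L] (neg : L → L) where
  clauses : Finset (Finset L)
  two_le : ∀ C ∈ clauses, 2 ≤ C.card
  tnd : ∀ p : L, ({p, neg p} : Finset L) ∈ clauses

noncomputable def clauseMin {L : Type} [DecidableEq L] (neg : L → L) (v : L → ℝ) (p : L)
    (C : Finset L) : ℝ :=
  if h : (C.erase p).Nonempty then (C.erase p).inf' h (fun q => v (neg q)) else 0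

noncomputable def step {L : Type} [DecidableEq L] (neg : L → L) (D : Doctrine L neg)
    (v : L → ℝ) : L → ℝ := fun p =>
  (D.clauses.filter (fun C => p ∈ C)).sup'
    ⟨{p, neg p}, Finset.mem_filter.mpr ⟨D.tnd p, by simp⟩⟩
    (clauseMin neg v p)

namespace Doctrine

variable {L : Type} [DecidableEq L] {neg : L → L}

def IsAutarkic (D : Doctrine L neg) (Sig : Finset L) : Prop :=
  (∀ p ∈ Sig, neg p ∉ Sig) ∧ ∀ C ∈ D.clauses, (∃ p ∈ Sig, neg p ∈ C) → ∃ q ∈ Sig, q ∈ C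

theorem neg_ne_self (D : Doctrine L neg) (p : L) : neg p ≠ p := by
  intro h
  have h2 := D.two_le _ (D.tnd p)
  rw [h] at h2
  simp at h2

end Doctrine

section Revision

variable {L : Type} [DecidableEq L] {neg : L → L}

theorem clauseMin_pair (D : Doctrine L neg) (hneg : ∀ p, neg (neg p) = p) (w : L → ℝ) (p : L) :
    clauseMin neg w p {p, neg p} = w p := by
  have herase : ({p, neg p} : Finset L).erase p = {neg p} :=
    erase_insert (by simpa using (D.neg_ne_self p).symm)
  simp [clauseMin, herase, hneg]

theorem le_step (D : Doctrine L neg) (hneg : ∀ p, neg (neg p) = p) (w : L → ℝ) :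
    w ≤ step neg D w := fun p => by
  have hmem : ({p, neg p} : Finset L) ∈ D.clauses.filter (fun C => p ∈ C) :=
    mem_filter.mpr ⟨D.tnd p, by simp⟩
  calc w p = clauseMin neg w p {p, neg p} := (clauseMin_pair D hneg w p).symm
    _ ≤ step neg D w p := le_sup' (clauseMin neg w p) hmem

theorem le_iterate_step (D : Doctrine L neg) (hneg : ∀ p, neg (neg p) = p) (w : L → ℝ)
    (n : ℕ) : w ≤ (step neg D)^[n] w :=
  Function.id_le_iterate_of_id_le (le_step D hneg) n w

theorem step_neg_lt_of_isAutarkic {D : Doctrine L neg} {Sig : Finset L} (hS : D.IsAutarkic Sig)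
    {w : L → ℝ} {M : ℝ} (hw : ∀ r ∈ Sig, w (neg r) < M) :
    ∀ r ∈ Sig, step neg D w (neg r) < M := by
  intro r hr
  refine (sup'_lt_iff _).mpr fun C hC => ?_
  obtain ⟨hCD, hrC⟩ := mem_filter.mp hC
  obtain ⟨q, hqS, hqC⟩ := hS.2 C hCD ⟨r, hr, hrC⟩
  have hq : q ∈ C.erase (neg r) := mem_erase.mpr ⟨fun h => hS.1 r hr (h ▸ hqS), hqC⟩
  rw [clauseMin, dif_pos ⟨q, hq⟩]
  exact (inf'_le _ hq).trans_lt (hw q hqS)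

theorem iterate_step_neg_lt_of_isAutarkic {D : Doctrine L neg} {Sig : Finset L}
    (hS : D.IsAutarkic Sig) {w : L → ℝ} {M : ℝ} (hw : ∀ r ∈ Sig, w (neg r) < M) (n : ℕ) :
    ∀ r ∈ Sig, (step neg D)^[n] w (neg r) < M :=
  Set.MapsTo.iterate (s := {w : L → ℝ | ∀ r ∈ Sig, w (neg r) < M})
    (fun _ hw' => step_neg_lt_of_isAutarkic hS hw') n hw

end Revision

theorem autarkic_majority_general {L : Type} [DecidableEq L]
    (neg : L → L) (hneg : ∀ p, neg (neg p) = p) (D : Doctrine L neg)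
    (Sig : Finset L) (hA1 : ∀ p ∈ Sig, neg p ∉ Sig)
    (hA2 : ∀ C ∈ D.clauses, (∃ p ∈ Sig, neg p ∈ C) → ∃ q ∈ Sig, q ∈ C)
    (v vs : L → ℝ)
    (hvs : ∃ n : ℕ, vs = (step neg D)^[n] v)
    (α : ℝ)
    (hmaj : ∀ p ∈ Sig, ∀ q ∈ Sig, v p - v (neg q) > α) :
    ∀ p ∈ Sig, vs p - vs (neg p) > α := by
  intro p hp
  obtain ⟨n, rfl⟩ := hvs
  have hlow : v p ≤ (step neg D)^[n] v p := le_iterate_step D hneg v n p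
  have hup : (step neg D)^[n] v (neg p) < v p - α :=
    iterate_step_neg_lt_of_isAutarkic ⟨hA1, hA2⟩
      (fun q hq => by linarith [hmaj p hp q hq]) n p hp
  linarith

theorem autarkic_majority {L : Type} [Fintype L] [DecidableEq L]
    (neg : L → L) (hneg : ∀ p, neg (neg p) = p) (D : Doctrine L neg)
    (Sig : Finset L) (hA1 : ∀ p ∈ Sig, neg p ∉ Sig)
    (hA2 : ∀ C ∈ D.clauses, (∃ p ∈ Sig, neg p ∈ C) → ∃ q ∈ Sig, q ∈ C)
    (v vs : L → ℝ) (hv : ∀ p, 0 ≤ v p ∧ v p ≤ 1)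
    (hvs : ∃ n : ℕ, vs = (step neg D)^[n] v) (hfix : step neg D vs = vs)
    (α : ℝ) (hα : 0 ≤ α ∧ α < 1)
    (hmaj : ∀ p ∈ Sig, ∀ q ∈ Sig, v p - v (neg q) > α) :
    ∀ p ∈ Sig, vs p - vs (neg p) > α :=
  autarkic_majority_general neg hneg D Sig hA1 hA2 v vs hvs α hmaj
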